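/- Let h > 0, let U ⊆ C¹([-h,0],ℝⁿ) be open, f : U → ℝⁿ, and let x : [-h,t_φ) → ℝⁿ be a solution of x' = f(x_t) on a finite maximal interval with x_t ∈ U for t ∈ (0,t_φ), t_φ < ∞. Assume both x and x' are bounded on [-h,t_φ) and that f satisfies: there is L ≥ 0 with |f(φ₁) − f(φ₂)| ≤ L ‖φ₁ − φ₂‖_∞ for all φ₁, φ₂ in the trajectory T = {x_t : t ∈ [0,t_φ)}. Then the trajectory T = {x_t : t ∈ [0,t_φ)} ⊆ C¹([-h,0],ℝⁿ) is relatively compact in the C¹-norm. -/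

import Mathlib

/-! Since `x'` is bounded by `M`, the map `t ↦ x_t` is `M`-Lipschitz in the sup norm, so by the
Lipschitz property of `f` along the trajectory, `x' t = f x_t` is `L M`-Lipschitz on `[0, t_φ)`.
Hence `x'` has a limit at `t_φ`, and `x` extends to a `C¹` function `X` on the compact interval
`[-h, t_φ]`. Any sequence of times in `[0, t_φ)` has a subsequence converging to some
`s₀ ∈ [0, t_φ]`, and uniform continuity of `X` and its derivative makes the segments converge
in `C¹` to `θ ↦ X (s₀ + θ)`. -/

open Set

noncomputable def supN {X : Type*} [NormedAddCommGroup X] (a b : ℝ) (f : ℝ → X) : ℝ :=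
  ⨆ t : Set.Icc a b, ‖f t.1‖

def C1on {X : Type*} [NormedAddCommGroup X] [NormedSpace ℝ X] (a b : ℝ) (f : ℝ → X) : Prop :=
  ContinuousOn f (Set.Icc a b) ∧ (∀ t ∈ Set.Icc a b, DifferentiableWithinAt ℝ f (Set.Icc a b) t) ∧
    ContinuousOn (derivWithin f (Set.Icc a b)) (Set.Icc a b)

noncomputable def nC1 {X : Type*} [NormedAddCommGroup X] [NormedSpace ℝ X] (a b : ℝ) (f : ℝ → X) : ℝ :=
  supN a b f + supN a b (derivWithin f (Set.Icc a b))

open Filter Topology Function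
open scoped NNReal

lemma UniformContinuousOn.exists_tendsto_nhdsWithin {α β : Type*} [UniformSpace α]
    [UniformSpace β] [CompleteSpace β] {f : α → β} {s : Set α} {a : α}
    (hf : UniformContinuousOn f s) (ha : a ∈ closure s) : ∃ c, Tendsto f (𝓝[s] a) (𝓝 c) :=
  haveI := mem_closure_iff_nhdsWithin_neBot.1 ha
  CompleteSpace.complete ((cauchy_nhds.mono nhdsWithin_le_nhds).map_of_le hf inf_le_right)

lemma ContinuousOn.update_Icc_of_tendsto {Y : Type*} [TopologicalSpace Y] {a b : ℝ}
    {g : ℝ → Y} {c : Y} (hg : ContinuousOn g (Ico a b)) (hc : Tendsto g (𝓝[<] b) (𝓝 c)) :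
    ContinuousOn (update g b c) (Icc a b) := by
  intro s hs
  rcases hs.2.eq_or_lt with rfl | hlt
  · rw [continuousWithinAt_update_same, Icc_sdiff_right]
    exact hc.mono_left (nhdsWithin_mono _ Ico_subset_Iio_self)
  · rw [continuousWithinAt_update_of_ne hlt.ne, ← continuousWithinAt_inter (Iio_mem_nhds hlt)]
    exact (hg s ⟨hs.1, hlt⟩).mono fun y hy => ⟨hy.1.1, hy.2⟩

section Calculus

variable {E : Type*} [NormedAddCommGroup E] [NormedSpace ℝ E] {a b : ℝ}

lemma HasDerivWithinAt.comp_const_add_of_mapsTo {f : ℝ → E} {f' : E} {s t : Set ℝ} {c θ : ℝ}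
    (hf : HasDerivWithinAt f f' s (c + θ)) (hst : MapsTo (c + ·) t s) :
    HasDerivWithinAt (fun θ => f (c + θ)) f' t θ := by
  have := hf.scomp θ ((hasDerivWithinAt_id θ t).const_add c) hst
  rwa [one_smul] at this

lemma exists_eqOn_hasDerivWithinAt_Icc [CompleteSpace E] {x x' D : ℝ → E}
    (hx : ∀ t ∈ Ico a b, HasDerivWithinAt x (x' t) (Ico a b) t) (hD : ContinuousOn D (Icc a b))
    (hDx : EqOn D x' (Ico a b)) :
    ∃ X : ℝ → E, EqOn X x (Ico a b) ∧ ∀ s ∈ Icc a b, HasDerivWithinAt X (D s) (Icc a b) s := by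
  set X : ℝ → E := fun s => x a + ∫ u in a..s, D u
  have hX : ∀ s ∈ Icc a b, HasDerivWithinAt X (D s) (Icc a b) s := by
    intro s hs
    have : Fact (s ∈ Icc a b) := ⟨hs⟩
    refine (intervalIntegral.integral_hasDerivWithinAt_right ?_
      (hD.stronglyMeasurableAtFilter_nhdsWithin measurableSet_Icc s) (hD s hs)).const_add (x a)
    exact (hD.mono (uIcc_subset_Icc (left_mem_Icc.2 (hs.1.trans hs.2)) hs)).intervalIntegrable
  refine ⟨X, fun s hs => ?_, hX⟩
  have hXx' : ∀ r ∈ Ico a b, HasDerivWithinAt (X - x) 0 (Ico a b) r := fun r hr => by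
    simpa [hDx hr] using ((hX r (Ico_subset_Icc_self hr)).mono Ico_subset_Icc_self).sub (hx r hr)
  have := (convex_Ico a b).norm_image_sub_le_of_norm_hasDerivWithin_le hXx'
    (fun _ _ => norm_zero.le) (left_mem_Ico.2 (hs.1.trans_lt hs.2)) hs
  simpa [X, sub_eq_zero] using this

end Calculus

section supN

variable {E : Type*} [NormedAddCommGroup E] {a b : ℝ} {F G : ℝ → E}

lemma supN_nonneg : 0 ≤ supN a b F :=
  Real.iSup_nonneg fun _ => norm_nonneg _

lemma supN_le {c : ℝ} (hc : 0 ≤ c) (hF : ∀ θ ∈ Icc a b, ‖F θ‖ ≤ c) : supN a b F ≤ c :=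
  Real.iSup_le (fun θ => hF θ.1 θ.2) hc

lemma supN_congr (h : EqOn F G (Icc a b)) : supN a b F = supN a b G :=
  iSup_congr fun θ => by rw [h θ.2]

lemma UniformContinuousOn.tendsto_supN_comp_const_add_sub {ι : Type*} {l : Filter ι} {S : Set ℝ}
    (hF : UniformContinuousOn F S) {s : ι → ℝ} {s₀ : ℝ} (hs : Tendsto s l (𝓝 s₀))
    (hsS : ∀ i, MapsTo (s i + ·) (Icc a b) S) (hs₀S : MapsTo (s₀ + ·) (Icc a b) S) :
    Tendsto (fun i => supN a b fun θ => F (s i + θ) - F (s₀ + θ)) l (𝓝 0) := by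
  rw [Metric.tendsto_nhds]
  intro ε hε
  obtain ⟨δ, hδ, hFδ⟩ := Metric.uniformContinuousOn_iff.1 hF (ε / 2) (half_pos hε)
  filter_upwards [Metric.tendsto_nhds.1 hs δ hδ] with i hi
  rw [Real.dist_0_eq_abs, abs_of_nonneg supN_nonneg]
  refine (supN_le (half_pos hε).le fun θ hθ => ?_).trans_lt (half_lt_self hε)
  rw [← dist_eq_norm]
  exact (hFδ _ (hsS i hθ) _ (hs₀S hθ) (by rwa [dist_add_right])).le

end supN

section nC1

variable {E : Type*} [NormedAddCommGroup E] [NormedSpace ℝ E] {a b : ℝ}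

lemma nC1_congr {F G : ℝ → E} (h : EqOn F G (Icc a b)) : nC1 a b F = nC1 a b G := by
  unfold nC1
  rw [supN_congr h, supN_congr fun θ hθ => derivWithin_congr h (h hθ)]

lemma nC1_eq_of_hasDerivWithinAt {F F' : ℝ → E} (hab : a < b)
    (hF : ∀ θ ∈ Icc a b, HasDerivWithinAt F (F' θ) (Icc a b) θ) :
    nC1 a b F = supN a b F + supN a b F' :=
  congrArg (supN a b F + ·)
    (supN_congr fun θ hθ => (hF θ hθ).derivWithin (uniqueDiffOn_Icc hab θ hθ))

variable {X D : ℝ → E} {c d : ℝ}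

lemma C1on_comp_const_add (hab : a < b)
    (hX : ∀ s ∈ Icc c d, HasDerivWithinAt X (D s) (Icc c d) s) (hD : ContinuousOn D (Icc c d))
    {s₀ : ℝ} (hs₀ : MapsTo (s₀ + ·) (Icc a b) (Icc c d)) :
    C1on a b fun θ => X (s₀ + θ) := by
  have hderiv : ∀ θ ∈ Icc a b, HasDerivWithinAt (fun θ => X (s₀ + θ)) (D (s₀ + θ)) (Icc a b) θ :=
    fun θ hθ => (hX _ (hs₀ hθ)).comp_const_add_of_mapsTo hs₀
  refine ⟨fun θ hθ => (hderiv θ hθ).continuousWithinAt,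
    fun θ hθ => (hderiv θ hθ).differentiableWithinAt, ?_⟩
  refine (hD.comp (continuousOn_const.add continuousOn_id) hs₀).congr fun θ hθ => ?_
  exact (hderiv θ hθ).derivWithin (uniqueDiffOn_Icc hab θ hθ)

lemma tendsto_nC1_comp_const_add_sub {ι : Type*} {l : Filter ι} (hab : a < b)
    (hX : ∀ s ∈ Icc c d, HasDerivWithinAt X (D s) (Icc c d) s) (hD : ContinuousOn D (Icc c d))
    {s : ι → ℝ} {s₀ : ℝ} (hs : Tendsto s l (𝓝 s₀))
    (hsI : ∀ i, MapsTo (s i + ·) (Icc a b) (Icc c d)) (hs₀ : MapsTo (s₀ + ·) (Icc a b) (Icc c d)) :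
    Tendsto (fun i => nC1 a b ((fun θ => X (s i + θ)) - fun θ => X (s₀ + θ))) l (𝓝 0) := by
  have hXc : ContinuousOn X (Icc c d) := fun s hs => (hX s hs).continuousWithinAt
  have hderiv : ∀ i, ∀ θ ∈ Icc a b,
      HasDerivWithinAt ((fun θ => X (s i + θ)) - fun θ => X (s₀ + θ))
        (D (s i + θ) - D (s₀ + θ)) (Icc a b) θ := fun i θ hθ =>
    ((hX _ (hsI i hθ)).comp_const_add_of_mapsTo (hsI i)).sub
      ((hX _ (hs₀ hθ)).comp_const_add_of_mapsTo hs₀)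
  simp_rw [nC1_eq_of_hasDerivWithinAt hab (hderiv _)]
  have := ((isCompact_Icc.uniformContinuousOn_of_continuous hXc).tendsto_supN_comp_const_add_sub
      hs hsI hs₀).add
    ((isCompact_Icc.uniformContinuousOn_of_continuous hD).tendsto_supN_comp_const_add_sub
      hs hsI hs₀)
  rwa [add_zero] at this

end nC1

lemma lipschitzOnWith_of_eq_apply_history {E : Type*} [NormedAddCommGroup E]
    {F : (ℝ → E) → E} {x y : ℝ → E} {a b : ℝ} {S T : Set ℝ} {K : ℝ≥0} {L : ℝ} (hL : 0 ≤ L)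
    (hx : LipschitzOnWith K x T) (hST : ∀ t ∈ S, MapsTo (t + ·) (Icc a b) T)
    (hy : ∀ t ∈ S, y t = F fun θ => x (t + θ))
    (hF : ∀ t₁ ∈ S, ∀ t₂ ∈ S, ‖F (fun θ => x (t₁ + θ)) - F (fun θ => x (t₂ + θ))‖ ≤
      L * supN a b ((fun θ => x (t₁ + θ)) - fun θ => x (t₂ + θ))) :
    LipschitzOnWith (L * K).toNNReal y S := by
  refine LipschitzOnWith.of_dist_le' fun t₁ h₁ t₂ h₂ => ?_
  have hsup : supN a b ((fun θ => x (t₁ + θ)) - fun θ => x (t₂ + θ)) ≤ K * dist t₁ t₂ :=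
    supN_le (by positivity) fun θ hθ => by
      simpa [Real.dist_eq] using hx.norm_sub_le (hST t₁ h₁ hθ) (hST t₂ h₂ hθ)
  rw [dist_eq_norm, hy t₁ h₁, hy t₂ h₂, mul_assoc]
  exact (hF t₁ h₁ t₂ h₂).trans (mul_le_mul_of_nonneg_left hsup hL)

theorem stmt17_general (n : ℕ) (h tφ : ℝ) (hh : 0 < h) (htφ : 0 < tφ)
    (f : (ℝ → EuclideanSpace ℝ (Fin n)) → EuclideanSpace ℝ (Fin n))
    (x : ℝ → EuclideanSpace ℝ (Fin n)) (x' : ℝ → EuclideanSpace ℝ (Fin n))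
    (hx : ∀ t ∈ Set.Ico (-h) tφ, HasDerivWithinAt x (x' t) (Set.Ico (-h) tφ) t)
    (hx'c : ContinuousOn x' (Set.Ico (-h) tφ))
    (hode : ∀ t ∈ Set.Ico (0:ℝ) tφ, x' t = f (fun θ => x (t + θ)))
    (hxb : ∃ M : ℝ, ∀ t ∈ Set.Ico (-h) tφ, ‖x t‖ ≤ M ∧ ‖x' t‖ ≤ M)
    (L : ℝ) (hL : 0 ≤ L)
    (hfL : ∀ t₁ ∈ Set.Ico (0:ℝ) tφ, ∀ t₂ ∈ Set.Ico (0:ℝ) tφ,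
      ‖f (fun θ => x (t₁ + θ)) - f (fun θ => x (t₂ + θ))‖ ≤
        L * supN (-h) 0 ((fun θ => x (t₁ + θ)) - fun θ => x (t₂ + θ))) :
    ∀ t : ℕ → ℝ, (∀ k, t k ∈ Set.Ico (0:ℝ) tφ) →
      ∃ φ : ℕ → ℕ, StrictMono φ ∧ ∃ g : ℝ → EuclideanSpace ℝ (Fin n), C1on (-h) 0 g ∧
        Filter.Tendsto
          (fun k => nC1 (-h) 0 ((fun θ => x (t (φ k) + θ)) - g))
          Filter.atTop (nhds 0) := by
  intro t ht
  obtain ⟨M, hM⟩ := hxb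
  have hshiftIco : ∀ s ∈ Ico (0:ℝ) tφ, MapsTo (s + ·) (Icc (-h) 0) (Ico (-h) tφ) :=
    fun s hs θ hθ => ⟨by linarith [hs.1, hθ.1], by linarith [hs.2, hθ.2]⟩
  have hxLip : LipschitzOnWith M.toNNReal x (Ico (-h) tφ) :=
    LipschitzOnWith.of_dist_le' fun s hs u hu => by
      simpa [dist_eq_norm] using (convex_Ico (-h) tφ).norm_image_sub_le_of_norm_hasDerivWithin_le
        hx (fun r hr => (hM r hr).2) hu hs
  have hx'Lip := lipschitzOnWith_of_eq_apply_history hL hxLip hshiftIco hode hfL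
  obtain ⟨c, hc⟩ := hx'Lip.uniformContinuousOn.exists_tendsto_nhdsWithin
    (closure_Ico htφ.ne ▸ right_mem_Icc.2 htφ.le)
  rw [nhdsWithin_Ico_eq_nhdsLT htφ] at hc
  have hD := hx'c.update_Icc_of_tendsto hc
  obtain ⟨X, hXx, hX⟩ := exists_eqOn_hasDerivWithinAt_Icc hx hD fun s hs => update_of_ne hs.2.ne ..
  obtain ⟨s₀, hs₀, φ, hφ, htφs₀⟩ :=
    isCompact_Icc.tendsto_subseq fun k => Ico_subset_Icc_self (ht k)
  have hshiftIcc : ∀ s ∈ Icc (0:ℝ) tφ, MapsTo (s + ·) (Icc (-h) 0) (Icc (-h) tφ) :=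
    fun s hs θ hθ => ⟨by linarith [hs.1, hθ.1], by linarith [hs.2, hθ.2]⟩
  refine ⟨φ, hφ, fun θ => X (s₀ + θ),
    C1on_comp_const_add (neg_lt_zero.2 hh) hX hD (hshiftIcc s₀ hs₀), ?_⟩
  have hxX : ∀ k, EqOn ((fun θ => x (t (φ k) + θ)) - fun θ => X (s₀ + θ))
      ((fun θ => X (t (φ k) + θ)) - fun θ => X (s₀ + θ)) (Icc (-h) 0) := fun k θ hθ =>
    congrArg (· - X (s₀ + θ)) (hXx (hshiftIco _ (ht _) hθ)).symm
  simp_rw [nC1_congr (hxX _)]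
  exact tendsto_nC1_comp_const_add_sub (neg_lt_zero.2 hh) hX hD htφs₀
    (fun k => hshiftIcc _ (Ico_subset_Icc_self (ht _))) (hshiftIcc s₀ hs₀)

/-- on a finite maximal interval, if x and x' are bounded and f is
Lipschitz (sup-norm) on the trajectory, then the trajectory {x_t : t ∈ [0,t_φ)} is
relatively compact in the C¹-norm (stated sequentially). -/
theorem stmt17 (n : ℕ) (h tφ : ℝ) (hh : 0 < h) (htφ : 0 < tφ)
    (U : Set (ℝ → EuclideanSpace ℝ (Fin n)))
    (f : (ℝ → EuclideanSpace ℝ (Fin n)) → EuclideanSpace ℝ (Fin n))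
    (x : ℝ → EuclideanSpace ℝ (Fin n)) (x' : ℝ → EuclideanSpace ℝ (Fin n))
    (hx : ∀ t ∈ Set.Ico (-h) tφ, HasDerivWithinAt x (x' t) (Set.Ico (-h) tφ) t)
    (hx'c : ContinuousOn x' (Set.Ico (-h) tφ))
    (hU : ∀ t ∈ Set.Ioo (0:ℝ) tφ, (fun θ => x (t + θ)) ∈ U)
    (hode : ∀ t ∈ Set.Ico (0:ℝ) tφ, x' t = f (fun θ => x (t + θ)))
    (hxb : ∃ M : ℝ, ∀ t ∈ Set.Ico (-h) tφ, ‖x t‖ ≤ M ∧ ‖x' t‖ ≤ M)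
    (L : ℝ) (hL : 0 ≤ L)
    (hfL : ∀ t₁ ∈ Set.Ico (0:ℝ) tφ, ∀ t₂ ∈ Set.Ico (0:ℝ) tφ,
      ‖f (fun θ => x (t₁ + θ)) - f (fun θ => x (t₂ + θ))‖ ≤
        L * supN (-h) 0 ((fun θ => x (t₁ + θ)) - fun θ => x (t₂ + θ))) :
    ∀ t : ℕ → ℝ, (∀ k, t k ∈ Set.Ico (0:ℝ) tφ) →
      ∃ φ : ℕ → ℕ, StrictMono φ ∧ ∃ g : ℝ → EuclideanSpace ℝ (Fin n), C1on (-h) 0 g ∧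
        Filter.Tendsto
          (fun k => nC1 (-h) 0 ((fun θ => x (t (φ k) + θ)) - g))
          Filter.atTop (nhds 0) :=
  stmt17_general n h tφ hh htφ f x x' hx hx'c hode hxb L hL hfL
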